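/- arXiv:2605.17696 — 6 statements merged into one kernel-verified Lean document; each statement's English description precedes it below -/
import Mathlib

section
/- Let k be a field of characteristic zero, V a finite-dimensional k-vector space, and D a right double Poisson bracket on the tensor algebra T(V) which is linear, i.e. D(a,b) ∈ k·1⊗V + V⊗k·1 for all a,b ∈ V. Then there exists a unique bilinear map μ : V×V → V such that D(a,b) = 1⊗μ(a,b) − μ(b,a)⊗1 for all a,b ∈ V, and μ is a left pre-Lie product on V, i.e. μ(μ(a,b),c) − μ(a,μ(b,c)) = μ(μ(b,a),c) − μ(b,μ(a,c)) for all a,b,c ∈ V. -/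
open TensorProduct

noncomputable section

namespace DoubleBrackets

variable (k : Type*) [Field k] (A : Type*) [Ring A] [Algebra k A]

/-- The flip `τ : A ⊗ A → A ⊗ A`, `x ⊗ y ↦ y ⊗ x`. -/
def tau : (A ⊗[k] A) →ₗ[k] (A ⊗[k] A) := (TensorProduct.comm k A A).toLinearMap

/-- `(12)·(x⊗y⊗z) = y⊗x⊗z`. -/
def p12 : (A ⊗[k] (A ⊗[k] A)) →ₗ[k] (A ⊗[k] (A ⊗[k] A)) :=
  (TensorProduct.assoc k A A A).toLinearMap
    ∘ₗ TensorProduct.map (tau k A) LinearMap.id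
    ∘ₗ (TensorProduct.assoc k A A A).symm.toLinearMap

/-- `(123)·(x⊗y⊗z) = z⊗x⊗y`. -/
def p123 : (A ⊗[k] (A ⊗[k] A)) →ₗ[k] (A ⊗[k] (A ⊗[k] A)) :=
  (TensorProduct.comm k (A ⊗[k] A) A).toLinearMap ∘ₗ (TensorProduct.assoc k A A A).symm.toLinearMap

/-- `(132)·(x⊗y⊗z) = y⊗z⊗x`. -/
def p132 : (A ⊗[k] (A ⊗[k] A)) →ₗ[k] (A ⊗[k] (A ⊗[k] A)) :=
  (TensorProduct.assoc k A A A).toLinearMap ∘ₗ (TensorProduct.comm k A (A ⊗[k] A)).toLinearMap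

/-- For a bilinear map `D : A × A → A ⊗ A` and `a ∈ A`, the map
`x ⊗ y ↦ D(a,x) ⊗ y : A ⊗ A → A ⊗ A ⊗ A`, used to form `D(a, D'(b,c)) ⊗ D''(b,c)`. -/
def applyLeft (D : A →ₗ[k] (A →ₗ[k] (A ⊗[k] A))) (a : A) :
    (A ⊗[k] A) →ₗ[k] (A ⊗[k] (A ⊗[k] A)) :=
  (TensorProduct.assoc k A A A).toLinearMap ∘ₗ TensorProduct.map (D a) LinearMap.id

/-- The double Jacobiator
`Jac_D(a,b,c) = D(a,D'(b,c))⊗D''(b,c) + (123)·(D(b,D'(c,a))⊗D''(c,a)) + (132)·(D(c,D'(a,b))⊗D''(a,b))`. -/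
def Jac (D : A →ₗ[k] (A →ₗ[k] (A ⊗[k] A))) (a b c : A) : A ⊗[k] (A ⊗[k] A) :=
  applyLeft k A D a (D b c)
    + p123 k A (applyLeft k A D b (D c a))
    + p132 k A (applyLeft k A D c (D a b))

/-- `D` is a right double bracket: skew-symmetry `D(a,b) = -τ D(b,a)` and the right Leibniz rule
`D(a,bc) = D'(a,b) ⊗ D''(a,b)c + D'(a,c) ⊗ bD''(a,c)`. -/
def IsRightDoubleBracket (D : A →ₗ[k] (A →ₗ[k] (A ⊗[k] A))) : Prop :=
  (∀ a b : A, D a b = - tau k A (D b a)) ∧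
  (∀ a b c : A, D a (b * c) =
      TensorProduct.map LinearMap.id (LinearMap.mulRight k c) (D a b)
      + TensorProduct.map LinearMap.id (LinearMap.mulLeft k b) (D a c))

/-- `D` is a right double Poisson bracket:
`Jac_D(a,b,c) - (12)·Jac_D(b,a,c) = 0` for all `a,b,c`. -/
def IsRightDoublePoissonBracket (D : A →ₗ[k] (A →ₗ[k] (A ⊗[k] A))) : Prop :=
  IsRightDoubleBracket k A D ∧
  ∀ a b c : A, Jac k A D a b c - p12 k A (Jac k A D b a c) = 0

end DoubleBrackets

/-
The product is read off as the `1 ⊗ V` component of `D(a,b)`; linearity and skew-symmetry then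
force `D(a,b) = 1 ⊗ μ(a,b) - μ(b,a) ⊗ 1`. By the Leibniz rule `D(x,1) = 0`, so each term
`D(x, D'(y,z)) ⊗ D''(y,z)` of the Jacobiator is explicit, and its `1 ⊗ 1 ⊗ V` component is an
associator of `μ`. Since `(12)` does not move that component, the `1 ⊗ 1 ⊗ V` component of the
double Jacobi identity is exactly the left pre-Lie identity.
-/

open DoubleBrackets TensorAlgebra

namespace DoubleBrackets

section Ring

variable {k : Type*} [Field k] {A : Type*} [Ring A] [Algebra k A]

@[simp]
lemma p12_tmul (x y z : A) : p12 k A (x ⊗ₜ[k] (y ⊗ₜ[k] z)) = y ⊗ₜ[k] (x ⊗ₜ[k] z) := by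
  simp [p12, tau]

@[simp]
lemma p123_tmul (x y z : A) : p123 k A (x ⊗ₜ[k] (y ⊗ₜ[k] z)) = z ⊗ₜ[k] (x ⊗ₜ[k] y) := by
  simp [p123]

@[simp]
lemma p132_tmul (x y z : A) : p132 k A (x ⊗ₜ[k] (y ⊗ₜ[k] z)) = y ⊗ₜ[k] (z ⊗ₜ[k] x) := by
  simp [p132]

@[simp]
lemma applyLeft_tmul (D : A →ₗ[k] (A →ₗ[k] (A ⊗[k] A))) (a x y : A) :
    applyLeft k A D a (x ⊗ₜ[k] y) = TensorProduct.assoc k A A A (D a x ⊗ₜ[k] y) := rfl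

lemma IsRightDoubleBracket.apply_one {D : A →ₗ[k] (A →ₗ[k] (A ⊗[k] A))}
    (hD : IsRightDoubleBracket k A D) (a : A) : D a 1 = 0 := by
  have h := hD.2 a 1 1
  rw [one_mul, LinearMap.mulRight_one, LinearMap.mulLeft_one, TensorProduct.map_id,
    LinearMap.id_apply] at h
  exact right_eq_add.mp h

end Ring

section TensorAlgebra

variable {k : Type*} [Field k] {V : Type*} [AddCommGroup V] [Module k V]

local notation "T" => TensorAlgebra k V

@[simp]
lemma ιInv_one : ιInv (1 : T) = 0 := by
  -- the auxiliary instances through which `ιInv` is defined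
  let : Module kᵐᵒᵖ V := Module.compHom _ ((RingHom.id k).fromOpposite mul_comm)
  have : IsCentralScalar k V := ⟨fun _ _ => rfl⟩
  simp [ιInv]

@[simp]
lemma ιInv_ι (v : V) : ιInv (ι k v) = v :=
  ι_leftInverse v

@[simp]
lemma algebraMapInv_ι (v : V) : algebraMapInv (ι k v) = 0 := by
  simp [algebraMapInv]

def unitTmulCoeff : T ⊗[k] T →ₗ[k] V :=
  (TensorProduct.lid k V).toLinearMap ∘ₗ TensorProduct.map algebraMapInv.toLinearMap ιInv

@[simp]
lemma unitTmulCoeff_tmul (x y : T) :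
    unitTmulCoeff (x ⊗ₜ[k] y) = algebraMapInv x • ιInv y :=
  rfl

def unitTmulUnitTmulCoeff : T ⊗[k] (T ⊗[k] T) →ₗ[k] V :=
  (TensorProduct.lid k V).toLinearMap ∘ₗ
    TensorProduct.map algebraMapInv.toLinearMap unitTmulCoeff

@[simp]
lemma unitTmulUnitTmulCoeff_tmul (x y z : T) :
    unitTmulUnitTmulCoeff (x ⊗ₜ[k] (y ⊗ₜ[k] z)) =
      algebraMapInv x • algebraMapInv y • ιInv z :=
  rfl

lemma unitTmulUnitTmulCoeff_p12 (t : T ⊗[k] (T ⊗[k] T)) :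
    unitTmulUnitTmulCoeff (p12 k T t) = unitTmulUnitTmulCoeff t := by
  change (unitTmulUnitTmulCoeff ∘ₗ p12 k T) t = unitTmulUnitTmulCoeff t
  congr 1
  ext x y z
  exact smul_comm _ _ _

def linearDoubleBracket (μ : V →ₗ[k] V →ₗ[k] V) (a b : V) : T ⊗[k] T :=
  (1 : T) ⊗ₜ[k] ι k (μ a b) - ι k (μ b a) ⊗ₜ[k] (1 : T)

@[simp]
lemma unitTmulCoeff_linearDoubleBracket (μ : V →ₗ[k] V →ₗ[k] V) (a b : V) :
    unitTmulCoeff (linearDoubleBracket μ a b) = μ a b := by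
  simp [linearDoubleBracket]

lemma eq_of_linearDoubleBracket_eq {μ μ' : V →ₗ[k] V →ₗ[k] V}
    (h : ∀ a b, linearDoubleBracket μ a b = linearDoubleBracket μ' a b) : μ = μ' := by
  ext a b
  simpa using congrArg unitTmulCoeff (h a b)

variable (D : TensorAlgebra k V →ₗ[k]
  (TensorAlgebra k V →ₗ[k] (TensorAlgebra k V ⊗[k] TensorAlgebra k V)))

def productOfDoubleBracket : V →ₗ[k] V →ₗ[k] V :=
  ((D ∘ₗ ι k).compl₂ (ι k)).compr₂ unitTmulCoeff

lemma apply_ι_ι_eq_linearDoubleBracket (hD : IsRightDoubleBracket k T D)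
    (hlin : ∀ a b : V, ∃ u v : V, D (ι k a) (ι k b) = (1 : T) ⊗ₜ[k] ι k u + ι k v ⊗ₜ[k] (1 : T))
    (a b : V) : D (ι k a) (ι k b) = linearDoubleBracket (productOfDoubleBracket D) a b := by
  obtain ⟨u, v, huv⟩ := hlin a b
  have hu : productOfDoubleBracket D a b = u := by
    simp [productOfDoubleBracket, huv]
  have hv : productOfDoubleBracket D b a = -v := by
    simp [productOfDoubleBracket, hD.1 (ι k b), huv, tau]
  rw [linearDoubleBracket, huv, hu, hv, map_neg, TensorProduct.neg_tmul, sub_neg_eq_add]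

variable {D} {μ : V →ₗ[k] V →ₗ[k] V}

lemma applyLeft_ι_linearDoubleBracket (hD1 : ∀ x, D x 1 = 0)
    (hμ : ∀ a b, D (ι k a) (ι k b) = linearDoubleBracket μ a b) (x y z : V) :
    applyLeft k T D (ι k x) (linearDoubleBracket μ y z) =
      ι k (μ (μ z y) x) ⊗ₜ[k] ((1 : T) ⊗ₜ[k] (1 : T))
        - (1 : T) ⊗ₜ[k] (ι k (μ x (μ z y)) ⊗ₜ[k] (1 : T)) := by
  simp [linearDoubleBracket, hD1, hμ, TensorProduct.sub_tmul]

lemma unitTmulUnitTmulCoeff_Jac (hD1 : ∀ x, D x 1 = 0)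
    (hμ : ∀ a b, D (ι k a) (ι k b) = linearDoubleBracket μ a b) (a b c : V) :
    unitTmulUnitTmulCoeff (Jac k T D (ι k a) (ι k b) (ι k c)) =
      μ (μ b a) c - μ b (μ a c) := by
  simp [Jac, hμ, applyLeft_ι_linearDoubleBracket hD1 hμ]
  abel

lemma isLeftPreLie_of_isRightDoublePoissonBracket (hD : IsRightDoublePoissonBracket k T D)
    (hμ : ∀ a b, D (ι k a) (ι k b) = linearDoubleBracket μ a b) (a b c : V) :
    μ (μ a b) c - μ a (μ b c) = μ (μ b a) c - μ b (μ a c) := by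
  have h := congrArg unitTmulUnitTmulCoeff (hD.2 (ι k a) (ι k b) (ι k c))
  rw [map_sub, map_zero, unitTmulUnitTmulCoeff_p12,
    unitTmulUnitTmulCoeff_Jac hD.1.apply_one hμ, unitTmulUnitTmulCoeff_Jac hD.1.apply_one hμ,
    sub_eq_zero] at h
  exact h.symm

end TensorAlgebra

end DoubleBrackets

theorem linear_right_double_poisson_bracket_classification_general
    (k : Type*) [Field k]
    (V : Type*) [AddCommGroup V] [Module k V]
    (D : TensorAlgebra k V →ₗ[k] (TensorAlgebra k V →ₗ[k]
          (TensorAlgebra k V ⊗[k] TensorAlgebra k V)))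
    (hD : IsRightDoublePoissonBracket k (TensorAlgebra k V) D)
    (hlin : ∀ a b : V, ∃ u v : V,
      D (ι k a) (ι k b) =
        (1 : TensorAlgebra k V) ⊗ₜ[k] ι k u + ι k v ⊗ₜ[k] (1 : TensorAlgebra k V)) :
    ∃ μ : V →ₗ[k] (V →ₗ[k] V),
      (∀ a b : V, D (ι k a) (ι k b) =
        (1 : TensorAlgebra k V) ⊗ₜ[k] ι k (μ a b)
          - ι k (μ b a) ⊗ₜ[k] (1 : TensorAlgebra k V)) ∧
      (∀ a b c : V, μ (μ a b) c - μ a (μ b c) = μ (μ b a) c - μ b (μ a c)) ∧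
      (∀ μ' : V →ₗ[k] (V →ₗ[k] V),
        (∀ a b : V, D (ι k a) (ι k b) =
          (1 : TensorAlgebra k V) ⊗ₜ[k] ι k (μ' a b)
            - ι k (μ' b a) ⊗ₜ[k] (1 : TensorAlgebra k V)) → μ' = μ) := by
  have hform := apply_ι_ι_eq_linearDoubleBracket D hD.1 hlin
  exact ⟨productOfDoubleBracket D, hform, isLeftPreLie_of_isRightDoublePoissonBracket hD hform,
    fun μ' hμ' => eq_of_linearDoubleBracket_eq fun a b => (hμ' a b).symm.trans (hform a b)⟩

/-- Any linear right double Poisson bracket on the tensor algebra `T(V)` is of the form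
`{{a,b}} = 1 ⊗ μ(a,b) - μ(b,a) ⊗ 1` for a unique bilinear map `μ`, which is moreover a left
pre-Lie product on `V`. -/
theorem linear_right_double_poisson_bracket_classification
    (k : Type*) [Field k] [CharZero k]
    (V : Type*) [AddCommGroup V] [Module k V] [FiniteDimensional k V]
    (D : TensorAlgebra k V →ₗ[k] (TensorAlgebra k V →ₗ[k]
          (TensorAlgebra k V ⊗[k] TensorAlgebra k V)))
    (hD : IsRightDoublePoissonBracket k (TensorAlgebra k V) D)
    (hlin : ∀ a b : V, ∃ u v : V,
      D (ι k a) (ι k b) =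
        (1 : TensorAlgebra k V) ⊗ₜ[k] ι k u + ι k v ⊗ₜ[k] (1 : TensorAlgebra k V)) :
    ∃ μ : V →ₗ[k] (V →ₗ[k] V),
      (∀ a b : V, D (ι k a) (ι k b) =
        (1 : TensorAlgebra k V) ⊗ₜ[k] ι k (μ a b)
          - ι k (μ b a) ⊗ₜ[k] (1 : TensorAlgebra k V)) ∧
      (∀ a b c : V, μ (μ a b) c - μ a (μ b c) = μ (μ b a) c - μ b (μ a c)) ∧
      (∀ μ' : V →ₗ[k] (V →ₗ[k] V),
        (∀ a b : V, D (ι k a) (ι k b) =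
          (1 : TensorAlgebra k V) ⊗ₜ[k] ι k (μ' a b)
            - ι k (μ' b a) ⊗ₜ[k] (1 : TensorAlgebra k V)) → μ' = μ) :=
  linear_right_double_poisson_bracket_classification_general k V D hD hlin
end
end

section
/- Let k be a field of characteristic zero, V a k-vector space, and · , {−,−} : V×V → V bilinear maps. In A = T(V), define D_id and D_(12) on pairs (u,w) with u ∈ V and w ∈ k·1 ⊕ V by D_id(u,1) = D_(12)(u,1) = 0, D_id(u,v) = 1⊗{u,v} − {v,u}⊗1 and D_(12)(u,v) = 1⊗(u·v) − (v·u)⊗1 for u,v ∈ V. For a,b,c ∈ V set T1 := D_(12)(a, D_id'(b,c))⊗D_id''(b,c), T2 := (13)·(D_id'(c,a)⊗D_(12)(b, D_id''(c,a))), T3 := (132)·(D_id(c, D_(12)'(a,b))⊗D_(12)''(a,b)), T4 := (23)·(D_(12)'(a,b)⊗D_id(c, D_(12)''(a,b))) (all well defined since every first Sweedler component lies in k·1 ⊕ V). Then T1 + T2 + T3 + T4 = 1⊗1⊗({b·a,c} − {a·b,c}) + 1⊗({c,a·b} − a·{c,b} − {c,a}·b)⊗1 + ({c,b}·a + b·{c,a}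 − {c,b·a})⊗1⊗1 in A^⊗3. In particular, if (V, ·, {−,−}) is a Poisson-left-pre-Lie algebra then T1+T2+T3+T4 = 0 for all a,b,c ∈ V. -/
/-!
Both brackets vanish on `1` and send `V` into `1 ⊗ V + V ⊗ 1`, so in each of the four terms only
one Sweedler component survives and the term is a single bracket of elements of `V` placed in one
slot of `1 ⊗ 1 ⊗ 1`. Collecting slots, the three coefficients are the defects of the symmetry
`{a·b,c} = {b·a,c}` and of the Leibniz rule, which vanish in a Poisson-left-pre-Lie algebra.
-/

open TensorProduct

noncomputable section

namespace DoubleBrackets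

variable (k : Type*) [Field k] (A : Type*) [Ring A] [Algebra k A]

/-- `(23)·(x⊗y⊗z) = x⊗z⊗y`. -/
def p23 : (A ⊗[k] (A ⊗[k] A)) →ₗ[k] (A ⊗[k] (A ⊗[k] A)) :=
  TensorProduct.map LinearMap.id (tau k A)

/-- `(13)·(x⊗y⊗z) = z⊗y⊗x`. -/
def p13 : (A ⊗[k] (A ⊗[k] A)) →ₗ[k] (A ⊗[k] (A ⊗[k] A)) :=
  p12 k A ∘ₗ p23 k A ∘ₗ p12 k A

/-- For a linear map `F : A → A ⊗ A`, the map `x ⊗ y ↦ F(x) ⊗ y`, used to form `D(a,ξ')⊗ξ''`. -/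
def applyLeft' (F : A →ₗ[k] (A ⊗[k] A)) :
    (A ⊗[k] A) →ₗ[k] (A ⊗[k] (A ⊗[k] A)) :=
  (TensorProduct.assoc k A A A).toLinearMap ∘ₗ TensorProduct.map F LinearMap.id

/-- For a linear map `F : A → A ⊗ A`, the map `x ⊗ y ↦ x ⊗ F(y)`, used to form `ξ'⊗D(a,ξ'')`. -/
def applyRight' (F : A →ₗ[k] (A ⊗[k] A)) :
    (A ⊗[k] A) →ₗ[k] (A ⊗[k] (A ⊗[k] A)) :=
  TensorProduct.map LinearMap.id F

end DoubleBrackets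

def IsPoissonLeftPreLie (k V : Type*) [Field k] [AddCommGroup V] [Module k V]
    (mul br : V →ₗ[k] (V →ₗ[k] V)) : Prop :=
  (∀ a b c : V, mul (mul a b) c = mul a (mul b c)) ∧
  (∀ a b c : V, br (br a b) c - br a (br b c) = br (br b a) c - br b (br a c)) ∧
  (∀ a b c : V, br (mul a b) c = br (mul b a) c) ∧
  (∀ a b c : V, br a (mul b c) = mul (br a b) c + mul b (br a c))

open DoubleBrackets TensorAlgebra

namespace DoubleBrackets

variable {k : Type*} [Field k] {A : Type*} [Ring A] [Algebra k A]

@[simp]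
lemma p13_tmul (x y z : A) : p13 k A (x ⊗ₜ[k] (y ⊗ₜ[k] z)) = z ⊗ₜ[k] (y ⊗ₜ[k] x) := rfl

@[simp]
lemma p23_tmul (x y z : A) : p23 k A (x ⊗ₜ[k] (y ⊗ₜ[k] z)) = x ⊗ₜ[k] (z ⊗ₜ[k] y) := rfl

lemma applyLeft'_one_tmul_sub_tmul_one {F : A →ₗ[k] (A ⊗[k] A)} {x y p q : A}
    (hF1 : F 1 = 0) (hFy : F y = 1 ⊗ₜ[k] p - q ⊗ₜ[k] 1) :
    applyLeft' k A F (1 ⊗ₜ[k] x - y ⊗ₜ[k] 1)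
      = q ⊗ₜ[k] (1 ⊗ₜ[k] 1) - 1 ⊗ₜ[k] (p ⊗ₜ[k] 1) := by
  simp only [applyLeft', LinearMap.comp_apply, map_sub, map_tmul, hF1, hFy, zero_tmul,
    sub_tmul, LinearMap.id_coe, id_eq, LinearEquiv.coe_coe, assoc_tmul]
  abel

lemma applyRight'_one_tmul_sub_tmul_one {F : A →ₗ[k] (A ⊗[k] A)} {x y p q : A}
    (hF1 : F 1 = 0) (hFx : F x = 1 ⊗ₜ[k] p - q ⊗ₜ[k] 1) :
    applyRight' k A F (1 ⊗ₜ[k] x - y ⊗ₜ[k] 1)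
      = 1 ⊗ₜ[k] (1 ⊗ₜ[k] p) - 1 ⊗ₜ[k] (q ⊗ₜ[k] 1) := by
  simp [applyRight', hF1, hFx, tmul_sub]

end DoubleBrackets

theorem cross_jacobi_sum_of_linear_coupled_pair_general
    (k : Type*) [Field k]
    (V : Type*) [AddCommGroup V] [Module k V]
    (mul br : V →ₗ[k] (V →ₗ[k] V))
    (Didext D12ext : V → (TensorAlgebra k V →ₗ[k]
        (TensorAlgebra k V ⊗[k] TensorAlgebra k V)))
    (hDid1 : ∀ u : V, Didext u (1 : TensorAlgebra k V) = 0)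
    (hD121 : ∀ u : V, D12ext u (1 : TensorAlgebra k V) = 0)
    (hDidι : ∀ u v : V, Didext u (ι k v) =
      (1 : TensorAlgebra k V) ⊗ₜ[k] ι k (br u v)
        - ι k (br v u) ⊗ₜ[k] (1 : TensorAlgebra k V))
    (hD12ι : ∀ u v : V, D12ext u (ι k v) =
      (1 : TensorAlgebra k V) ⊗ₜ[k] ι k (mul u v)
        - ι k (mul v u) ⊗ₜ[k] (1 : TensorAlgebra k V)) :
    (∀ a b c : V,
      applyLeft' k (TensorAlgebra k V) (D12ext a)
          ((1 : TensorAlgebra k V) ⊗ₜ[k] ι k (br b c)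
            - ι k (br c b) ⊗ₜ[k] (1 : TensorAlgebra k V))
        + p13 k (TensorAlgebra k V)
            (applyRight' k (TensorAlgebra k V) (D12ext b)
              ((1 : TensorAlgebra k V) ⊗ₜ[k] ι k (br c a)
                - ι k (br a c) ⊗ₜ[k] (1 : TensorAlgebra k V)))
        + p132 k (TensorAlgebra k V)
            (applyLeft' k (TensorAlgebra k V) (Didext c)
              ((1 : TensorAlgebra k V) ⊗ₜ[k] ι k (mul a b)
                - ι k (mul b a) ⊗ₜ[k] (1 : TensorAlgebra k V)))
        + p23 k (TensorAlgebra k V)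
            (applyRight' k (TensorAlgebra k V) (Didext c)
              ((1 : TensorAlgebra k V) ⊗ₜ[k] ι k (mul a b)
                - ι k (mul b a) ⊗ₜ[k] (1 : TensorAlgebra k V)))
      = (1 : TensorAlgebra k V) ⊗ₜ[k] ((1 : TensorAlgebra k V) ⊗ₜ[k]
            ι k (br (mul b a) c - br (mul a b) c))
        + (1 : TensorAlgebra k V) ⊗ₜ[k]
            (ι k (br c (mul a b) - mul a (br c b) - mul (br c a) b)
              ⊗ₜ[k] (1 : TensorAlgebra k V))
        + ι k (mul (br c b) a + mul b (br c a) - br c (mul b a)) ⊗ₜ[k]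
            ((1 : TensorAlgebra k V) ⊗ₜ[k] (1 : TensorAlgebra k V))) ∧
    (IsPoissonLeftPreLie k V mul br →
      ∀ a b c : V,
      applyLeft' k (TensorAlgebra k V) (D12ext a)
          ((1 : TensorAlgebra k V) ⊗ₜ[k] ι k (br b c)
            - ι k (br c b) ⊗ₜ[k] (1 : TensorAlgebra k V))
        + p13 k (TensorAlgebra k V)
            (applyRight' k (TensorAlgebra k V) (D12ext b)
              ((1 : TensorAlgebra k V) ⊗ₜ[k] ι k (br c a)
                - ι k (br a c) ⊗ₜ[k] (1 : TensorAlgebra k V)))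
        + p132 k (TensorAlgebra k V)
            (applyLeft' k (TensorAlgebra k V) (Didext c)
              ((1 : TensorAlgebra k V) ⊗ₜ[k] ι k (mul a b)
                - ι k (mul b a) ⊗ₜ[k] (1 : TensorAlgebra k V)))
        + p23 k (TensorAlgebra k V)
            (applyRight' k (TensorAlgebra k V) (Didext c)
              ((1 : TensorAlgebra k V) ⊗ₜ[k] ι k (mul a b)
                - ι k (mul b a) ⊗ₜ[k] (1 : TensorAlgebra k V))) = 0) := by
  refine (fun cross => ⟨cross, fun hP a b c => (cross a b c).trans ?_⟩) fun a b c => ?_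
  · rw [applyLeft'_one_tmul_sub_tmul_one (hD121 a) (hD12ι a _),
      applyRight'_one_tmul_sub_tmul_one (hD121 b) (hD12ι b _),
      applyLeft'_one_tmul_sub_tmul_one (hDid1 c) (hDidι c _),
      applyRight'_one_tmul_sub_tmul_one (hDid1 c) (hDidι c _)]
    simp only [map_sub, map_add, p13_tmul, p132_tmul, p23_tmul, tmul_sub, sub_tmul,
      add_tmul]
    abel
  · obtain ⟨-, -, hcomm, hleib⟩ := hP
    rw [hcomm b a c, hleib c a b, hleib c b a]
    simp

/-- For the linear brackets `D_id(u,v) = 1⊗{u,v} − {v,u}⊗1` and `D₍₁₂₎(u,v) = 1⊗u·v − v·u⊗1`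
on `T(V)` (encoded by families of linear maps prescribed on `k·1 ⊕ V`), the cross-Jacobi sum
`T1+T2+T3+T4` equals
`1⊗1⊗({b·a,c}−{a·b,c}) + 1⊗({c,a·b}−a·{c,b}−{c,a}·b)⊗1 + ({c,b}·a+b·{c,a}−{c,b·a})⊗1⊗1`;
in particular it vanishes whenever `(V, ·, {−,−})` is a Poisson-left-pre-Lie algebra. -/
theorem cross_jacobi_sum_of_linear_coupled_pair
    (k : Type*) [Field k] [CharZero k]
    (V : Type*) [AddCommGroup V] [Module k V]
    (mul br : V →ₗ[k] (V →ₗ[k] V))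
    (Didext D12ext : V → (TensorAlgebra k V →ₗ[k]
        (TensorAlgebra k V ⊗[k] TensorAlgebra k V)))
    (hDid1 : ∀ u : V, Didext u (1 : TensorAlgebra k V) = 0)
    (hD121 : ∀ u : V, D12ext u (1 : TensorAlgebra k V) = 0)
    (hDidι : ∀ u v : V, Didext u (ι k v) =
      (1 : TensorAlgebra k V) ⊗ₜ[k] ι k (br u v)
        - ι k (br v u) ⊗ₜ[k] (1 : TensorAlgebra k V))
    (hD12ι : ∀ u v : V, D12ext u (ι k v) =
      (1 : TensorAlgebra k V) ⊗ₜ[k] ι k (mul u v)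
        - ι k (mul v u) ⊗ₜ[k] (1 : TensorAlgebra k V)) :
    (∀ a b c : V,
      applyLeft' k (TensorAlgebra k V) (D12ext a)
          ((1 : TensorAlgebra k V) ⊗ₜ[k] ι k (br b c)
            - ι k (br c b) ⊗ₜ[k] (1 : TensorAlgebra k V))
        + p13 k (TensorAlgebra k V)
            (applyRight' k (TensorAlgebra k V) (D12ext b)
              ((1 : TensorAlgebra k V) ⊗ₜ[k] ι k (br c a)
                - ι k (br a c) ⊗ₜ[k] (1 : TensorAlgebra k V)))
        + p132 k (TensorAlgebra k V)
            (applyLeft' k (TensorAlgebra k V) (Didext c)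
              ((1 : TensorAlgebra k V) ⊗ₜ[k] ι k (mul a b)
                - ι k (mul b a) ⊗ₜ[k] (1 : TensorAlgebra k V)))
        + p23 k (TensorAlgebra k V)
            (applyRight' k (TensorAlgebra k V) (Didext c)
              ((1 : TensorAlgebra k V) ⊗ₜ[k] ι k (mul a b)
                - ι k (mul b a) ⊗ₜ[k] (1 : TensorAlgebra k V)))
      = (1 : TensorAlgebra k V) ⊗ₜ[k] ((1 : TensorAlgebra k V) ⊗ₜ[k]
            ι k (br (mul b a) c - br (mul a b) c))
        + (1 : TensorAlgebra k V) ⊗ₜ[k]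
            (ι k (br c (mul a b) - mul a (br c b) - mul (br c a) b)
              ⊗ₜ[k] (1 : TensorAlgebra k V))
        + ι k (mul (br c b) a + mul b (br c a) - br c (mul b a)) ⊗ₜ[k]
            ((1 : TensorAlgebra k V) ⊗ₜ[k] (1 : TensorAlgebra k V))) ∧
    (IsPoissonLeftPreLie k V mul br →
      ∀ a b c : V,
      applyLeft' k (TensorAlgebra k V) (D12ext a)
          ((1 : TensorAlgebra k V) ⊗ₜ[k] ι k (br b c)
            - ι k (br c b) ⊗ₜ[k] (1 : TensorAlgebra k V))
        + p13 k (TensorAlgebra k V)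
            (applyRight' k (TensorAlgebra k V) (D12ext b)
              ((1 : TensorAlgebra k V) ⊗ₜ[k] ι k (br c a)
                - ι k (br a c) ⊗ₜ[k] (1 : TensorAlgebra k V)))
        + p132 k (TensorAlgebra k V)
            (applyLeft' k (TensorAlgebra k V) (Didext c)
              ((1 : TensorAlgebra k V) ⊗ₜ[k] ι k (mul a b)
                - ι k (mul b a) ⊗ₜ[k] (1 : TensorAlgebra k V)))
        + p23 k (TensorAlgebra k V)
            (applyRight' k (TensorAlgebra k V) (Didext c)
              ((1 : TensorAlgebra k V) ⊗ₜ[k] ι k (mul a b)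
                - ι k (mul b a) ⊗ₜ[k] (1 : TensorAlgebra k V))) = 0) :=
  cross_jacobi_sum_of_linear_coupled_pair_general k V mul br Didext D12ext hDid1 hD121 hDidι hD12ι
end
end

section
/- In Mat_3(k)⊗Mat_3(k) over a field k of characteristic zero, set R_1 := E_32∧E_31 and, for arbitrary scalars a_7, a_8, a_9, a_10 ∈ k, r := (a_7(E_11+E_22+E_33) + a_8(E_11−E_22) + a_9 E_32 + a_10 E_21) ∧ E_31. Then r satisfies the classical Yang–Baxter equation and [R_1^12, r^13 + r^23] = 0 in Mat_3(k)^⊗3. -/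
open TensorProduct

set_option synthInstance.maxHeartbeats 1000000

noncomputable section

namespace MatYB

variable (k : Type*) [Field k] (m : ℕ)

/-- The `m×m` matrix algebra over `k`. -/
abbrev M := Matrix (Fin m) (Fin m) k

/-- Matrix units `E i j`. -/
def E (i j : Fin m) : M k m := Matrix.single i j 1

/-- `A ∧ B = A ⊗ B - B ⊗ A`. -/
def wedge (A B : M k m) : M k m ⊗[k] M k m := A ⊗ₜ[k] B - B ⊗ₜ[k] A

/-- `ρ¹² = Σ Aₛ ⊗ Bₛ ⊗ 1` for `ρ = Σ Aₛ ⊗ Bₛ`. -/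
def u12 (ρ : M k m ⊗[k] M k m) : M k m ⊗[k] (M k m ⊗[k] M k m) :=
  TensorProduct.map LinearMap.id ((TensorProduct.mk k (M k m) (M k m)).flip 1) ρ

/-- `ρ¹³ = Σ Aₛ ⊗ 1 ⊗ Bₛ` for `ρ = Σ Aₛ ⊗ Bₛ`. -/
def u13 (ρ : M k m ⊗[k] M k m) : M k m ⊗[k] (M k m ⊗[k] M k m) :=
  TensorProduct.map LinearMap.id (TensorProduct.mk k (M k m) (M k m) 1) ρ

/-- `ρ²³ = Σ 1 ⊗ Aₛ ⊗ Bₛ` for `ρ = Σ Aₛ ⊗ Bₛ`. -/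
def u23 (ρ : M k m ⊗[k] M k m) : M k m ⊗[k] (M k m ⊗[k] M k m) :=
  (1 : M k m) ⊗ₜ[k] ρ

/-- The associative Yang–Baxter equation `ρ¹²ρ¹³ - ρ²³ρ¹² + ρ¹³ρ²³ = 0`. -/
def AYBE (ρ : M k m ⊗[k] M k m) : Prop :=
  u12 k m ρ * u13 k m ρ - u23 k m ρ * u12 k m ρ + u13 k m ρ * u23 k m ρ = 0

/-- The classical Yang–Baxter equation `[ρ¹²,ρ¹³] + [ρ¹²,ρ²³] + [ρ¹³,ρ²³] = 0`. -/
def CYBE (ρ : M k m ⊗[k] M k m) : Prop :=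
  (u12 k m ρ * u13 k m ρ - u13 k m ρ * u12 k m ρ)
    + (u12 k m ρ * u23 k m ρ - u23 k m ρ * u12 k m ρ)
    + (u13 k m ρ * u23 k m ρ - u23 k m ρ * u13 k m ρ) = 0

/-- The compatibility condition `[R¹², r¹³ + r²³] = 0`. -/
def Compat (R r : M k m ⊗[k] M k m) : Prop :=
  u12 k m R * (u13 k m r + u23 k m r) - (u13 k m r + u23 k m r) * u12 k m R = 0

end MatYB

open MatYB

/-! If `⁅E, A⁆ = s • E`, expanding the three commutators of `(A ∧ E)^{ij}` leaves only terms with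
`⁅E, A⁆` in one tensor slot, i.e. `s` times `±E ⊗ E ⊗ A`, `±E ⊗ A ⊗ E`, `±A ⊗ E ⊗ E`, and these
cancel in pairs. If moreover `B E = E B = 0` and `⁅B, A⁆ = t • E - s • B`, the commutator
`[(B ∧ E)¹², (A ∧ E)¹³ + (A ∧ E)²³]` reduces to `(s - s) • (B ⊗ E ⊗ E - E ⊗ B ⊗ E)`: the `-s • B`
part of `⁅B, A⁆` cancels the contribution of `⁅E, A⁆`.
For `E = E₃₁`, `B = E₃₂` and the given `A` this holds with `s = a₈`, `t = a₁₀`. -/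

namespace MatYB

variable {k : Type*} [Field k] {m : ℕ}

local notation "M³" => M k m ⊗[k] (M k m ⊗[k] M k m)

lemma u12_wedge (A B : M k m) :
    u12 k m (wedge k m A B) = A ⊗ₜ (B ⊗ₜ 1) - B ⊗ₜ (A ⊗ₜ 1) :=
  map_sub _ _ _

lemma u13_wedge (A B : M k m) :
    u13 k m (wedge k m A B) = A ⊗ₜ (1 ⊗ₜ B) - B ⊗ₜ (1 ⊗ₜ A) :=
  map_sub _ _ _

lemma u23_wedge (A B : M k m) :
    u23 k m (wedge k m A B) = 1 ⊗ₜ (A ⊗ₜ B) - 1 ⊗ₜ (B ⊗ₜ A) :=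
  tmul_sub _ _ _

/- The distributivity lemmas are instantiated at `M³` by hand: with the type left to unification,
`simp` fails to synthesize their ring instances on this nested tensor product. -/
lemma cybe_wedge_of_lie_eq_smul (A E : M k m) (s : k) (h : ⁅E, A⁆ = s • E) :
    CYBE k m (wedge k m A E) := by
  have hEA : E * A = A * E + s • E := sub_eq_iff_eq_add'.mp (by rwa [Ring.lie_def] at h)
  simp only [CYBE, u12_wedge, u13_wedge, u23_wedge, (sub_mul : ∀ x y z : M³, _),
    (mul_sub : ∀ x y z : M³, _), Algebra.TensorProduct.tmul_mul_tmul, one_mul, mul_one, hEA,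
    add_tmul, tmul_add, ← smul_tmul', tmul_smul]
  module

lemma compat_wedge_of_lie_eq (A B E : M k m) (s t : k) (hBE : B * E = 0) (hEB : E * B = 0)
    (hEA : ⁅E, A⁆ = s • E) (hBA : ⁅B, A⁆ = t • E - s • B) :
    Compat k m (wedge k m B E) (wedge k m A E) := by
  have hEA' : E * A = A * E + s • E := sub_eq_iff_eq_add'.mp (by rwa [Ring.lie_def] at hEA)
  have hBA' : B * A = A * B + (t • E - s • B) :=
    sub_eq_iff_eq_add'.mp (by rwa [Ring.lie_def] at hBA)
  simp only [Compat, u12_wedge, u13_wedge, u23_wedge, (sub_mul : ∀ x y z : M³, _),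
    (mul_sub : ∀ x y z : M³, _), (Distrib.right_distrib : ∀ x y z : M³, _),
    (Distrib.left_distrib : ∀ x y z : M³, _), Algebra.TensorProduct.tmul_mul_tmul, one_mul,
    mul_one, hEA', hBA', hBE, hEB, add_tmul, tmul_add, sub_tmul, tmul_sub, ← smul_tmul', tmul_smul,
    zero_tmul, tmul_zero]
  module

lemma E_mul_E (i j l n : Fin m) : E k m i j * E k m l n = if j = l then E k m i n else 0 := by
  split_ifs with h
  · subst h
    simp [E]
  · simp [E, h]

end MatYB

theorem case_A2_general (k : Type*) [Field k] (a₇ a₈ a₉ a₁₀ : k) :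
    CYBE k 3
      (wedge k 3
        (a₇ • (E k 3 0 0 + E k 3 1 1 + E k 3 2 2) + a₈ • (E k 3 0 0 - E k 3 1 1)
          + a₉ • E k 3 2 1 + a₁₀ • E k 3 1 0)
        (E k 3 2 0)) ∧
    Compat k 3 (wedge k 3 (E k 3 2 1) (E k 3 2 0))
      (wedge k 3
        (a₇ • (E k 3 0 0 + E k 3 1 1 + E k 3 2 2) + a₈ • (E k 3 0 0 - E k 3 1 1)
          + a₉ • E k 3 2 1 + a₁₀ • E k 3 1 0)
        (E k 3 2 0)) := by
  set A : M k 3 := a₇ • (E k 3 0 0 + E k 3 1 1 + E k 3 2 2) + a₈ • (E k 3 0 0 - E k 3 1 1)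
      + a₉ • E k 3 2 1 + a₁₀ • E k 3 1 0 with hA
  have hEA : ⁅E k 3 2 0, A⁆ = a₈ • E k 3 2 0 := by
    simp only [Ring.lie_def, hA, mul_add, add_mul, mul_sub, sub_mul, mul_smul_comm,
      smul_mul_assoc, E_mul_E, Fin.reduceEq, ↓reduceIte]
    module
  have hBA : ⁅E k 3 2 1, A⁆ = a₁₀ • E k 3 2 0 - a₈ • E k 3 2 1 := by
    simp only [Ring.lie_def, hA, mul_add, add_mul, mul_sub, sub_mul, mul_smul_comm,
      smul_mul_assoc, E_mul_E, Fin.reduceEq, ↓reduceIte]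
    module
  exact ⟨cybe_wedge_of_lie_eq_smul A _ a₈ hEA,
    compat_wedge_of_lie_eq A _ _ a₈ a₁₀ (by simp [E_mul_E]) (by simp [E_mul_E]) hEA hBA⟩

/-- Case A.2 on `k³`: `r_{A.2} = (a₇(E₁₁+E₂₂+E₃₃) + a₈(E₁₁−E₂₂) + a₉E₃₂ + a₁₀E₂₁)∧E₃₁`
satisfies the CYBE and is compatible with `R₁ = E₃₂∧E₃₁`. -/
theorem case_A2 (k : Type*) [Field k] [CharZero k] (a₇ a₈ a₉ a₁₀ : k) :
    CYBE k 3
      (wedge k 3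
        (a₇ • (E k 3 0 0 + E k 3 1 1 + E k 3 2 2) + a₈ • (E k 3 0 0 - E k 3 1 1)
          + a₉ • E k 3 2 1 + a₁₀ • E k 3 1 0)
        (E k 3 2 0)) ∧
    Compat k 3 (wedge k 3 (E k 3 2 1) (E k 3 2 0))
      (wedge k 3
        (a₇ • (E k 3 0 0 + E k 3 1 1 + E k 3 2 2) + a₈ • (E k 3 0 0 - E k 3 1 1)
          + a₉ • E k 3 2 1 + a₁₀ • E k 3 1 0)
        (E k 3 2 0)) :=
  case_A2_general k a₇ a₈ a₉ a₁₀
end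
end

section
/- Let k be a field of characteristic zero, n ≥ 2, and λ_1,…,λ_n ∈ k pairwise distinct. Let V = k^n with standard basis e_1,…,e_n. Define the linear map R : V⊗V → V⊗V by R(e_i⊗e_j) = (λ_i−λ_j)^{-1}(e_i⊗e_j + e_j⊗e_i − e_i⊗e_i − e_j⊗e_j) for i ≠ j and R(e_i⊗e_i) = 0, and define X ∈ End(V) by X e_i = Σ_{m≠i} (λ_i−λ_m)^{-1}(e_m − e_i). Then R commutes with X⊗id_V + id_V⊗X, i.e. R∘(X⊗id_V + id_V⊗X) = (X⊗id_V + id_V⊗X)∘R as linear maps on V⊗V. -/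
/-!
On basis tensors `R (eᵢ ⊗ eⱼ) = -(λᵢ - λⱼ)⁻¹ • (eᵢ - eⱼ) ⊗ (eᵢ - eⱼ)`, and the sum defining
`X eᵢ` may run over all `m`, since its `m = i` term vanishes. Both sides of the commutation
relation, evaluated on `eᵢ ⊗ eⱼ`, then become sums over `m`. For `m ∉ {i, j}` the `m`-th terms
agree by the partial-fraction identity `1/((a-b)(b-c)) + 1/((b-c)(c-a)) + 1/((c-a)(a-b)) = 0`;
the terms `m = i` and `m = j` do not agree individually, but their sums do.
-/

open TensorProduct

theorem Fintype.sum_eq_sum_of_eq_off_pair {ι β : Type*} [Fintype ι] [DecidableEq ι]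
    [AddCommMonoid β] {f g : ι → β} {i j : ι} (hij : i ≠ j)
    (hoff : ∀ m, m ≠ i → m ≠ j → f m = g m) (hpair : f i + f j = g i + g j) :
    ∑ m, f m = ∑ m, g m := by
  have hj : j ∈ Finset.univ.erase i := Finset.mem_erase.2 ⟨hij.symm, Finset.mem_univ j⟩
  rw [← Finset.add_sum_erase _ f (Finset.mem_univ i), ← Finset.add_sum_erase _ f hj,
    ← Finset.add_sum_erase _ g (Finset.mem_univ i), ← Finset.add_sum_erase _ g hj,
    ← add_assoc, ← add_assoc, hpair]
  refine congrArg _ (Finset.sum_congr rfl fun m hm => ?_)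
  obtain ⟨hmj, hm⟩ := Finset.mem_erase.1 hm
  exact hoff m (Finset.ne_of_mem_erase hm) hmj

section

variable {k M ι : Type*} [Field k] [AddCommGroup M] [Module k M]

theorem sum_tmul_add_tmul_sum (s : Finset ι) (g h : ι → M) (x y : M) :
    (∑ m ∈ s, g m) ⊗ₜ[k] y + x ⊗ₜ[k] (∑ m ∈ s, h m) = ∑ m ∈ s, (g m ⊗ₜ y + x ⊗ₜ h m) := by
  rw [sum_tmul, tmul_sum, Finset.sum_add_distrib]

theorem apply_tmul_eq_neg_inv_smul_tmul_self {R : M ⊗[k] M →ₗ[k] M ⊗[k] M}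
    {lam : ι → k} {e : ι → M} (hRdiag : ∀ i, R (e i ⊗ₜ e i) = 0)
    (hRoff : ∀ i j, i ≠ j → R (e i ⊗ₜ e j) =
      (lam i - lam j)⁻¹ • (e i ⊗ₜ e j + e j ⊗ₜ e i - e i ⊗ₜ e i - e j ⊗ₜ e j)) (i j : ι) :
    R (e i ⊗ₜ e j) = -(lam i - lam j)⁻¹ • ((e i - e j) ⊗ₜ (e i - e j)) := by
  rcases eq_or_ne i j with rfl | hij
  · simp [hRdiag]
  · rw [hRoff i j hij, sub_tmul, tmul_sub, tmul_sub]
    module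

variable [Fintype ι] [DecidableEq ι]

theorem sum_erase_smul_sub_eq_sum (c : ι → k) (e : ι → M) (i : ι) :
    ∑ m ∈ Finset.univ.erase i, c m • (e m - e i) = ∑ m, c m • (e m - e i) :=
  Finset.sum_erase _ (by simp)

theorem comp_apply_tmul_eq_comp_apply_tmul {R : M ⊗[k] M →ₗ[k] M ⊗[k] M} {X : M →ₗ[k] M}
    {lam : ι → k} {e : ι → M} (hlam : Function.Injective lam)
    (hR : ∀ i j, R (e i ⊗ₜ e j) = -(lam i - lam j)⁻¹ • ((e i - e j) ⊗ₜ (e i - e j)))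
    (hX : ∀ i, X (e i) = ∑ m, (lam i - lam m)⁻¹ • (e m - e i)) (i j : ι) :
    (R ∘ₗ (map X LinearMap.id + map LinearMap.id X)) (e i ⊗ₜ e j)
      = ((map X LinearMap.id + map LinearMap.id X) ∘ₗ R) (e i ⊗ₜ e j) := by
  have hXsub : X (e i - e j) =
      ∑ m, ((lam i - lam m)⁻¹ • (e m - e i) - (lam j - lam m)⁻¹ • (e m - e j)) := by
    rw [map_sub, hX, hX, Finset.sum_sub_distrib]
  simp only [LinearMap.comp_apply, LinearMap.add_apply, map_tmul, LinearMap.id_apply, hR i j,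
    map_smul, hX]
  rw [sum_tmul_add_tmul_sum, hXsub, sum_tmul_add_tmul_sum, map_sum, Finset.smul_sum]
  have hne : ∀ {a b}, a ≠ b → lam a - lam b ≠ 0 := fun h => sub_ne_zero.2 (hlam.ne h)
  rcases eq_or_ne i j with rfl | hij
  · refine Finset.sum_congr rfl fun m _ => ?_
    rcases eq_or_ne m i with rfl | hmi
    · simp
    simp only [map_add, ← smul_tmul', tmul_smul, map_smul, sub_tmul, tmul_sub, map_sub, hR,
      sub_self, inv_zero, tmul_zero, smul_zero]
    have := hne hmi
    match_scalars <;> field_simp <;> ring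
  refine Fintype.sum_eq_sum_of_eq_off_pair hij (fun m hmi hmj => ?_) ?_
  · simp only [map_add, ← smul_tmul', tmul_smul, map_smul, sub_tmul, tmul_sub, map_sub, hR]
    have := hne hmi
    have := hne hmj
    have := hne hmi.symm
    have := hne hmj.symm
    have := hne hij
    match_scalars <;> field_simp <;> ring
  · simp only [map_add, ← smul_tmul', tmul_smul, map_smul, sub_tmul, tmul_sub, map_sub, hR,
      sub_self, inv_zero, zero_tmul, tmul_zero, smul_zero, map_zero]
    have := hne hij
    have := hne hij.symm
    match_scalars <;> field_simp <;> ring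

end

theorem R_commutes_with_S_general
    (k : Type*) [Field k] (n : ℕ)
    (lam : Fin n → k) (hlam : Function.Injective lam)
    (R : ((Fin n → k) ⊗[k] (Fin n → k)) →ₗ[k] ((Fin n → k) ⊗[k] (Fin n → k)))
    (hRdiag : ∀ i : Fin n, R (Pi.single i (1 : k) ⊗ₜ[k] Pi.single i (1 : k)) = 0)
    (hRoff : ∀ i j : Fin n, i ≠ j →
      R (Pi.single i (1 : k) ⊗ₜ[k] Pi.single j (1 : k)) =
        (lam i - lam j)⁻¹ •
          (Pi.single i (1 : k) ⊗ₜ[k] Pi.single j (1 : k)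
            + Pi.single j (1 : k) ⊗ₜ[k] Pi.single i (1 : k)
            - Pi.single i (1 : k) ⊗ₜ[k] Pi.single i (1 : k)
            - Pi.single j (1 : k) ⊗ₜ[k] Pi.single j (1 : k)))
    (X : (Fin n → k) →ₗ[k] (Fin n → k))
    (hX : ∀ i : Fin n, X (Pi.single i (1 : k)) =
      ∑ m ∈ Finset.univ.erase i, (lam i - lam m)⁻¹ • (Pi.single m (1 : k) - Pi.single i (1 : k))) :
    R ∘ₗ (TensorProduct.map X LinearMap.id + TensorProduct.map LinearMap.id X)
      = (TensorProduct.map X LinearMap.id + TensorProduct.map LinearMap.id X) ∘ₗ R := by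
  have hR := apply_tmul_eq_neg_inv_smul_tmul_self hRdiag hRoff
  have hX' (i : Fin n) := (hX i).trans (sum_erase_smul_sub_eq_sum _ (Pi.single · (1 : k)) i)
  refine ((Pi.basisFun k (Fin n)).tensorProduct (Pi.basisFun k (Fin n))).ext fun ⟨i, j⟩ => ?_
  simpa using comp_apply_tmul_eq_comp_apply_tmul hlam hR hX' i j

/-- For pairwise distinct `λ₁,…,λₙ`, the operator `R` on `kⁿ ⊗ kⁿ` with
`R(eᵢ⊗eⱼ) = (λᵢ−λⱼ)⁻¹(eᵢ⊗eⱼ + eⱼ⊗eᵢ − eᵢ⊗eᵢ − eⱼ⊗eⱼ)` (and `R(eᵢ⊗eᵢ)=0`) commutes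
with `X⊗id + id⊗X`, where `X eᵢ = Σ_{m≠i} (λᵢ−λₘ)⁻¹(eₘ − eᵢ)`. -/
theorem R_commutes_with_S
    (k : Type*) [Field k] [CharZero k] (n : ℕ) (hn : 2 ≤ n)
    (lam : Fin n → k) (hlam : Function.Injective lam)
    (R : ((Fin n → k) ⊗[k] (Fin n → k)) →ₗ[k] ((Fin n → k) ⊗[k] (Fin n → k)))
    (hRdiag : ∀ i : Fin n, R (Pi.single i (1 : k) ⊗ₜ[k] Pi.single i (1 : k)) = 0)
    (hRoff : ∀ i j : Fin n, i ≠ j →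
      R (Pi.single i (1 : k) ⊗ₜ[k] Pi.single j (1 : k)) =
        (lam i - lam j)⁻¹ •
          (Pi.single i (1 : k) ⊗ₜ[k] Pi.single j (1 : k)
            + Pi.single j (1 : k) ⊗ₜ[k] Pi.single i (1 : k)
            - Pi.single i (1 : k) ⊗ₜ[k] Pi.single i (1 : k)
            - Pi.single j (1 : k) ⊗ₜ[k] Pi.single j (1 : k)))
    (X : (Fin n → k) →ₗ[k] (Fin n → k))
    (hX : ∀ i : Fin n, X (Pi.single i (1 : k)) =
      ∑ m ∈ Finset.univ.erase i, (lam i - lam m)⁻¹ • (Pi.single m (1 : k) - Pi.single i (1 : k))) :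
    R ∘ₗ (TensorProduct.map X LinearMap.id + TensorProduct.map LinearMap.id X)
      = (TensorProduct.map X LinearMap.id + TensorProduct.map LinearMap.id X) ∘ₗ R :=
  R_commutes_with_S_general k n lam hlam R hRdiag hRoff X hX
end

section
/- Let k be a field of characteristic zero, n ≥ 1, A = k[x_1,…,x_n] the polynomial algebra, and M = A^n (n-tuples of polynomials, identified with the A-module of derivations of A via the i-th component corresponding to ∂/∂x_i). Equip M with the componentwise product (f·g)_j := f_j g_j and the bilinear bracket {f,g}_j := Σ_{i=1}^n f_i · ∂(g_j)/∂x_i. Then (M, ·, {−,−}) is a Poisson-left-pre-Lie algebra: · is associative, the associator {{f,g},h} − {f,{g,h}} is symmetric in f and g, {f·g,h} = {g·f,h}, and {f,g·h} = {f,g}·h + g·{f,h} for all f,g,h ∈ M. -/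
open MvPolynomial

/-!
The bracket `{f, g}` applies the derivation `D_f = Σᵢ fᵢ ∂/∂xᵢ` to each component of `g`, so
by the Leibniz rule `D_f (D_g h) = D_{D_f g} h + Σᵢ Σₗ fᵢ gₗ ∂²h/∂xᵢ∂xₗ`. The associator is
therefore minus this second-order term, which is symmetric in `f` and `g` because partial
derivatives commute. The remaining identities are the Leibniz rule for `D_f` and the
commutativity of the componentwise product.
-/

theorem MvPolynomial.pderiv_pderiv_comm {σ R : Type*} [CommSemiring R] (i l : σ)
    (p : MvPolynomial σ R) : pderiv i (pderiv l p) = pderiv l (pderiv i p) := by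
  classical
  have pderiv_pderiv_X (a b c : σ) : pderiv a (pderiv b (X c : MvPolynomial σ R)) = 0 := by
    rw [pderiv_X, Pi.single_apply]
    split_ifs <;> simp
  induction p using MvPolynomial.induction_on with
  | C a => simp
  | add p q hp hq => simp only [map_add, hp, hq]
  | mul_X p m ih =>
    simp only [pderiv_mul, map_add, pderiv_pderiv_X, ih, mul_zero, add_zero]
    ring

noncomputable section

variable {σ ι R : Type*} [Fintype σ] [CommSemiring R]

def pderivBracket (f : σ → MvPolynomial σ R) (g : ι → MvPolynomial σ R) :
    ι → MvPolynomial σ R :=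
  fun j => ∑ i, f i * pderiv i (g j)

def pderivSecondOrder (f g : σ → MvPolynomial σ R) (h : ι → MvPolynomial σ R) :
    ι → MvPolynomial σ R :=
  fun j => ∑ i, ∑ l, f i * g l * pderiv i (pderiv l (h j))

theorem pderivBracket_mul_right (f : σ → MvPolynomial σ R) (g h : ι → MvPolynomial σ R) :
    pderivBracket f (g * h) = pderivBracket f g * h + g * pderivBracket f h := by
  funext j
  simp only [pderivBracket, Pi.add_apply, Pi.mul_apply, pderiv_mul, Finset.sum_mul,
    Finset.mul_sum, ← Finset.sum_add_distrib]
  exact Finset.sum_congr rfl fun i _ => by ring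

theorem pderivBracket_pderivBracket (f g : σ → MvPolynomial σ R) (h : ι → MvPolynomial σ R) :
    pderivBracket f (pderivBracket g h) =
      pderivBracket (pderivBracket f g) h + pderivSecondOrder f g h := by
  funext j
  simp only [pderivBracket, pderivSecondOrder, Pi.add_apply, map_sum, pderiv_mul,
    mul_add, Finset.mul_sum, Finset.sum_mul, Finset.sum_add_distrib]
  rw [Finset.sum_comm (f := fun i l => f l * pderiv l (g i) * pderiv i (h j))]
  refine congrArg₂ (· + ·) ?_ ?_ <;>
    exact Finset.sum_congr rfl fun i _ => Finset.sum_congr rfl fun l _ => by ring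

theorem pderivSecondOrder_comm (f g : σ → MvPolynomial σ R) (h : ι → MvPolynomial σ R) :
    pderivSecondOrder f g h = pderivSecondOrder g f h := by
  funext j
  rw [pderivSecondOrder, pderivSecondOrder, Finset.sum_comm]
  exact Finset.sum_congr rfl fun i _ => Finset.sum_congr rfl fun l _ => by
    rw [pderiv_pderiv_comm, mul_comm (f l)]

theorem pderivBracket_associator_symm {R : Type*} [CommRing R]
    (f g : σ → MvPolynomial σ R) (h : ι → MvPolynomial σ R) :
    pderivBracket (pderivBracket f g) h - pderivBracket f (pderivBracket g h) =
      pderivBracket (pderivBracket g f) h - pderivBracket g (pderivBracket f h) := by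
  rw [pderivBracket_pderivBracket, pderivBracket_pderivBracket, pderivSecondOrder_comm f g,
    sub_add_cancel_left, sub_add_cancel_left]

end

theorem derivations_of_polynomials_poisson_left_pre_lie_general
    (k : Type*) [Field k] (n : ℕ) :
    let br : (Fin n → MvPolynomial (Fin n) k) → (Fin n → MvPolynomial (Fin n) k) →
        (Fin n → MvPolynomial (Fin n) k) :=
      fun f g j => ∑ i : Fin n, f i * MvPolynomial.pderiv i (g j)
    (∀ f g h : Fin n → MvPolynomial (Fin n) k, (f * g) * h = f * (g * h)) ∧
    (∀ f g h : Fin n → MvPolynomial (Fin n) k,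
      br (br f g) h - br f (br g h) = br (br g f) h - br g (br f h)) ∧
    (∀ f g h : Fin n → MvPolynomial (Fin n) k, br (f * g) h = br (g * f) h) ∧
    (∀ f g h : Fin n → MvPolynomial (Fin n) k,
      br f (g * h) = br f g * h + g * br f h) :=
  ⟨mul_assoc, pderivBracket_associator_symm, fun f g h => by rw [mul_comm f g],
    pderivBracket_mul_right⟩

/-- The module of derivations of `k[x₁,…,xₙ]`, identified with `n`-tuples of polynomials,
with the componentwise product `(f·g)ⱼ = fⱼgⱼ` and the pre-Lie bracket
`{f,g}ⱼ = Σᵢ fᵢ ∂(gⱼ)/∂xᵢ`, is a Poisson-left-pre-Lie algebra. -/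
theorem derivations_of_polynomials_poisson_left_pre_lie
    (k : Type*) [Field k] [CharZero k] (n : ℕ) (hn : 1 ≤ n) :
    let br : (Fin n → MvPolynomial (Fin n) k) → (Fin n → MvPolynomial (Fin n) k) →
        (Fin n → MvPolynomial (Fin n) k) :=
      fun f g j => ∑ i : Fin n, f i * MvPolynomial.pderiv i (g j)
    (∀ f g h : Fin n → MvPolynomial (Fin n) k, (f * g) * h = f * (g * h)) ∧
    (∀ f g h : Fin n → MvPolynomial (Fin n) k,
      br (br f g) h - br f (br g h) = br (br g f) h - br g (br f h)) ∧
    (∀ f g h : Fin n → MvPolynomial (Fin n) k, br (f * g) h = br (g * f) h) ∧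
    (∀ f g h : Fin n → MvPolynomial (Fin n) k,
      br f (g * h) = br f g * h + g * br f h) :=
  derivations_of_polynomials_poisson_left_pre_lie_general k n
end

section
/- Let k be a field of characteristic zero and n ≥ 4. Let U ⊂ Mat_n(k) be the subspace of strictly upper-triangular matrices (a ∈ U iff a_{ij} = 0 whenever i ≥ j), and fix x ∈ Mat_n(k) supported on the (n−3)-rd superdiagonal, i.e. x_{ij} = 0 unless j = i + n − 3. Define {a,b} := a(xb − bx) for a,b ∈ U. Then {a,b} ∈ U for all a,b ∈ U, and (U, matrix multiplication, {−,−}) is a Poisson-left-pre-Lie algebra: the associator {{a,b},c} − {a,{b,c}} is symmetric in a and b, {ab,c} = {ba,c}, and {a,bc} = {a,b}c + b{a,c} for all a,b,c ∈ U. -/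
/-!
Grade `Matrix (Fin n) (Fin n) R` by distance from the diagonal: a matrix vanishing below the
`d`-th superdiagonal has "degree" at least `d`, degrees add under multiplication, and a matrix
of degree at least `n` is zero. Strictly upper-triangular matrices have degree `1` and `x` has
degree `n - 3`, so `{a,b}` has degree `(n - 3) + 2`. Every term in the three identities then has
degree at least `(n - 3) + 3 ≥ n`, so both sides of each identity are zero.
-/

namespace Matrix

variable {R : Type*} {n : ℕ}

def VanishesBelowSuperdiagonal (d : ℕ) (a : Matrix (Fin n) (Fin n) R) [Zero R] : Prop :=
  ∀ i j : Fin n, (j : ℕ) < i + d → a i j = 0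

theorem vanishesBelowSuperdiagonal_one_iff [Zero R] {a : Matrix (Fin n) (Fin n) R} :
    a.VanishesBelowSuperdiagonal 1 ↔ ∀ i j : Fin n, j ≤ i → a i j = 0 := by
  simp only [VanishesBelowSuperdiagonal, Nat.lt_add_one_iff, Fin.val_fin_le]

namespace VanishesBelowSuperdiagonal

theorem mono [Zero R] {d e : ℕ} {a : Matrix (Fin n) (Fin n) R}
    (ha : a.VanishesBelowSuperdiagonal d) (hed : e ≤ d) : a.VanishesBelowSuperdiagonal e :=
  fun i j hij => ha i j (by omega)

theorem eq_zero [Zero R] {d : ℕ} {a : Matrix (Fin n) (Fin n) R}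
    (ha : a.VanishesBelowSuperdiagonal d) (hd : n ≤ d) : a = 0 := by
  ext i j
  exact ha i j (by omega)

theorem mul [NonUnitalNonAssocSemiring R] {d e : ℕ} {a b : Matrix (Fin n) (Fin n) R}
    (ha : a.VanishesBelowSuperdiagonal d) (hb : b.VanishesBelowSuperdiagonal e) :
    (a * b).VanishesBelowSuperdiagonal (d + e) := by
  intro i j hij
  rw [mul_apply]
  refine Finset.sum_eq_zero fun l _ => ?_
  by_cases hil : (l : ℕ) < i + d
  · rw [ha i l hil, zero_mul]
  · rw [hb l j (by omega), mul_zero]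

theorem sub [AddGroup R] {d : ℕ} {a b : Matrix (Fin n) (Fin n) R}
    (ha : a.VanishesBelowSuperdiagonal d) (hb : b.VanishesBelowSuperdiagonal d) :
    (a - b).VanishesBelowSuperdiagonal d :=
  fun i j hij => by rw [sub_apply, ha i j hij, hb i j hij, sub_zero]

theorem mul_sub_mul [NonUnitalNonAssocRing R] {d e : ℕ} {x b : Matrix (Fin n) (Fin n) R}
    (hx : x.VanishesBelowSuperdiagonal d) (hb : b.VanishesBelowSuperdiagonal e) :
    (x * b - b * x).VanishesBelowSuperdiagonal (d + e) :=
  (hx.mul hb).sub (add_comm e d ▸ hb.mul hx)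

end VanishesBelowSuperdiagonal

end Matrix

open Matrix

theorem strictly_upper_triangular_poisson_left_pre_lie_general
    (k : Type*) [Field k] (n : ℕ)
    (x : Matrix (Fin n) (Fin n) k)
    (hx : ∀ i j : Fin n, (j : ℕ) ≠ (i : ℕ) + (n - 3) → x i j = 0) :
    let SU : Matrix (Fin n) (Fin n) k → Prop := fun a => ∀ i j : Fin n, j ≤ i → a i j = 0
    let br : Matrix (Fin n) (Fin n) k → Matrix (Fin n) (Fin n) k → Matrix (Fin n) (Fin n) k :=
      fun a b => a * (x * b - b * x)
    (∀ a b : Matrix (Fin n) (Fin n) k, SU a → SU b → SU (a * b)) ∧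
    (∀ a b : Matrix (Fin n) (Fin n) k, SU a → SU b → SU (br a b)) ∧
    (∀ a b c : Matrix (Fin n) (Fin n) k, SU a → SU b → SU c →
      br (br a b) c - br a (br b c) = br (br b a) c - br b (br a c)) ∧
    (∀ a b c : Matrix (Fin n) (Fin n) k, SU a → SU b → SU c →
      br (a * b) c = br (b * a) c) ∧
    (∀ a b c : Matrix (Fin n) (Fin n) k, SU a → SU b → SU c →
      br a (b * c) = br a b * c + b * br a c) := by
  intro SU br
  have hSU {a} : SU a ↔ a.VanishesBelowSuperdiagonal 1 := vanishesBelowSuperdiagonal_one_iff.symm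
  have hx' : x.VanishesBelowSuperdiagonal (n - 3) := fun i j hij => hx i j hij.ne
  have hbr {p q : ℕ} {a b : Matrix (Fin n) (Fin n) k} (ha : a.VanishesBelowSuperdiagonal p)
      (hb : b.VanishesBelowSuperdiagonal q) :
      (br a b).VanishesBelowSuperdiagonal (p + (n - 3 + q)) :=
    ha.mul (hx'.mul_sub_mul hb)
  refine ⟨fun a b ha hb => ?_, fun a b ha hb => ?_, fun a b c ha hb hc => ?_,
    fun a b c ha hb hc => ?_, fun a b c ha hb hc => ?_⟩ <;> simp only [hSU] at *
  · exact (ha.mul hb).mono (by omega)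
  · exact (hbr ha hb).mono (by omega)
  · rw [(hbr (hbr ha hb) hc).eq_zero (by omega), (hbr ha (hbr hb hc)).eq_zero (by omega),
      (hbr (hbr hb ha) hc).eq_zero (by omega), (hbr hb (hbr ha hc)).eq_zero (by omega)]
  · rw [(hbr (ha.mul hb) hc).eq_zero (by omega), (hbr (hb.mul ha) hc).eq_zero (by omega)]
  · rw [(hbr ha (hb.mul hc)).eq_zero (by omega), ((hbr ha hb).mul hc).eq_zero (by omega),
      (hb.mul (hbr ha hc)).eq_zero (by omega), add_zero]

/-- Let `U ⊂ Matₙ(k)` be the strictly upper-triangular matrices and `x` a matrix supported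
on the `(n−3)`-rd superdiagonal (`n ≥ 4`). With `{a,b} := a(xb − bx)`, `U` is closed under
multiplication and under `{−,−}`, and `(U, matrix multiplication, {−,−})` is a
Poisson-left-pre-Lie algebra: the associator of `{−,−}` is symmetric in its first two
arguments, `{ab,c} = {ba,c}`, and `{a,bc} = {a,b}c + b{a,c}`. -/
theorem strictly_upper_triangular_poisson_left_pre_lie
    (k : Type*) [Field k] [CharZero k] (n : ℕ) (hn : 4 ≤ n)
    (x : Matrix (Fin n) (Fin n) k)
    (hx : ∀ i j : Fin n, (j : ℕ) ≠ (i : ℕ) + (n - 3) → x i j = 0) :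
    let SU : Matrix (Fin n) (Fin n) k → Prop := fun a => ∀ i j : Fin n, j ≤ i → a i j = 0
    let br : Matrix (Fin n) (Fin n) k → Matrix (Fin n) (Fin n) k → Matrix (Fin n) (Fin n) k :=
      fun a b => a * (x * b - b * x)
    (∀ a b : Matrix (Fin n) (Fin n) k, SU a → SU b → SU (a * b)) ∧
    (∀ a b : Matrix (Fin n) (Fin n) k, SU a → SU b → SU (br a b)) ∧
    (∀ a b c : Matrix (Fin n) (Fin n) k, SU a → SU b → SU c →
      br (br a b) c - br a (br b c) = br (br b a) c - br b (br a c)) ∧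
    (∀ a b c : Matrix (Fin n) (Fin n) k, SU a → SU b → SU c →
      br (a * b) c = br (b * a) c) ∧
    (∀ a b c : Matrix (Fin n) (Fin n) k, SU a → SU b → SU c →
      br a (b * c) = br a b * c + b * br a c) :=
  strictly_upper_triangular_poisson_left_pre_lie_general k n x hx
end
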